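/- arXiv:2204.02277 — 3 statements merged into one kernel-verified Lean document; each statement's English description precedes it below -/
import Mathlib

section
/- Let b > 0 satisfy arg(1/2 + bi) = α₀ (i.e., b = tan(α₀)/2). Then for any two distinct indices j, k ∈ {1,...,m}, the vector η with η_j = 1/2 + bi, η_k = 1/2 − bi, and all other coordinates 0, is an extreme point of S_α^m = {z ∈ ℂ^m : |arg z_l| ≤ α₀ ∀l, ∑_l z_l = 1}. -/
noncomputable def payoff {m n : ℕ} (A : Matrix (Fin m) (Fin n) ℂ)
    (z : Fin m → ℂ) (w : Fin n → ℂ) : ℝ :=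
  (∑ i, ∑ j, (starRingEnd ℂ) (z i) * A i j * w j).re

def Sarg (m : ℕ) (α : ℝ) : Set (Fin m → ℂ) :=
  {z | (∀ i, 0 ≤ (z i).re ∧ |(z i).im| ≤ Real.tan α * (z i).re) ∧ ∑ i, z i = 1}

private lemma comb_eq {a c p q P Q : ℝ} (ha : 0 < a) (hc : 0 < c)
    (hp : p ≤ P) (hq : q ≤ Q) (h : a * p + c * q = a * P + c * Q) : p = P := by
  refine le_antisymm hp ?_
  nlinarith [mul_le_mul_of_nonneg_left hq hc.le]

/-- The two-support vectors with entries 1/2 ± i·tan(α₀)/2 are extreme points of S_α^m. -/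
theorem eta_extreme (m : ℕ) (hm : 2 ≤ m) (α₀ b : ℝ) (hα : α₀ ∈ Set.Ioo 0 (Real.pi / 2))
    (hb0 : 0 < b) (hb : b = Real.tan α₀ / 2) (j k : Fin m) (hjk : j ≠ k) :
    (fun l => if l = j then (⟨1/2, b⟩ : ℂ) else if l = k then (⟨1/2, -b⟩ : ℂ) else 0)
      ∈ Set.extremePoints ℝ (Sarg m α₀) := by
  set T := Real.tan α₀ with hT
  have hT0 : 0 < T := by rw [hb] at hb0; linarith
  set η : Fin m → ℂ := fun l => if l = j then (⟨1/2, b⟩ : ℂ)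
    else if l = k then (⟨1/2, -b⟩ : ℂ) else 0 with hη
  have hsum : ∀ (u v : ℂ),
      (∑ i, (if i = j then u else if i = k then v else 0)) = u + v := by
    intro u v
    have hpt : ∀ i : Fin m, (if i = j then u else if i = k then v else 0) =
        (if i = j then u else 0) + (if i = k then v else 0) := by
      intro i
      by_cases h1 : i = j
      · subst h1; simp [hjk]
      · simp [h1]
    rw [Finset.sum_congr rfl (fun i _ => hpt i), Finset.sum_add_distrib]
    simp
  have hmem : η ∈ Sarg m α₀ := by
    constructor
    · intro i
      by_cases hij : i = j
      · subst hij
        have hv : η i = ⟨1/2, b⟩ := by simp [hη]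
        rw [hv]
        refine ⟨by norm_num, ?_⟩
        show |b| ≤ Real.tan α₀ * (1/2)
        rw [abs_of_pos hb0, hb]; linarith
      · by_cases hik : i = k
        · subst hik
          have hv : η i = ⟨1/2, -b⟩ := by simp [hη, hij]
          rw [hv]
          refine ⟨by norm_num, ?_⟩
          show |(-b)| ≤ Real.tan α₀ * (1/2)
          rw [abs_neg, abs_of_pos hb0, hb]; linarith
        · simp [hη, hij, hik]
    · show (∑ i, η i) = 1
      rw [hη]; rw [hsum]
      apply Complex.ext
      all_goals simp
      all_goals norm_num
  rw [mem_extremePoints]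
  refine ⟨hmem, ?_⟩
  -- key claim: any point of Sarg appearing in a convex combination equal to η must be η
  have key : ∀ (a c : ℝ) (x y : Fin m → ℂ), 0 < a → 0 < c → a + c = 1 →
      x ∈ Sarg m α₀ → y ∈ Sarg m α₀ → a • x + c • y = η → x = η := by
    intro a c x y ha hc hac hxS hyS heq
    obtain ⟨hx1, hx2⟩ := hxS
    obtain ⟨hy1, hy2⟩ := hyS
    have heqi : ∀ i, a • x i + c • y i = η i := by
      intro i
      have := congrFun heq i
      simpa using this
    have hre : ∀ i, a * (x i).re + c * (y i).re = (η i).re := by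
      intro i
      have := congrArg Complex.re (heqi i)
      simpa [Complex.smul_re] using this
    have him : ∀ i, a * (x i).im + c * (y i).im = (η i).im := by
      intro i
      have := congrArg Complex.im (heqi i)
      simpa [Complex.smul_im] using this
    -- coordinates outside {j,k} vanish
    have hzero : ∀ l, l ≠ j → l ≠ k → x l = 0 := by
      intro l hlj hlk
      have hrl : a * (x l).re + c * (y l).re = 0 := by
        have := hre l; simpa [hη, hlj, hlk] using this
      have hxr : (x l).re = 0 := by
        have h1 := (hx1 l).1
        have h2 := (hy1 l).1
        have hz : a * (x l).re = 0 := by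
          nlinarith [mul_nonneg ha.le h1, mul_nonneg hc.le h2]
        rcases mul_eq_zero.mp hz with h | h
        · exact absurd h (ne_of_gt ha)
        · exact h
      have hxi : (x l).im = 0 := by
        have h2 := (hx1 l).2
        rw [hxr] at h2
        have := abs_nonneg (x l).im
        have : |(x l).im| = 0 := le_antisymm (by simpa using h2) this
        exact abs_eq_zero.mp this
      exact Complex.ext hxr hxi
    have hyzero : ∀ l, l ≠ j → l ≠ k → y l = 0 := by
      intro l hlj hlk
      have hrl : a * (x l).re + c * (y l).re = 0 := by
        have := hre l; simpa [hη, hlj, hlk] using this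
      have hyr : (y l).re = 0 := by
        have h1 := (hx1 l).1
        have h2 := (hy1 l).1
        have hz : c * (y l).re = 0 := by
          nlinarith [mul_nonneg ha.le h1, mul_nonneg hc.le h2]
        rcases mul_eq_zero.mp hz with h | h
        · exact absurd h (ne_of_gt hc)
        · exact h
      have hyi : (y l).im = 0 := by
        have h2 := (hy1 l).2
        rw [hyr] at h2
        have h3 := abs_nonneg (y l).im
        have : |(y l).im| = 0 := le_antisymm (by simpa using h2) h3
        exact abs_eq_zero.mp this
      exact Complex.ext hyr hyi
    -- at coordinate j, equality in the argument constraint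
    have hxj_im : (x j).im = T * (x j).re := by
      have e_re : a * (x j).re + c * (y j).re = 1/2 := by
        have := hre j; simpa [hη] using this
      have e_im : a * (x j).im + c * (y j).im = b := by
        have := him j; simpa [hη] using this
      have hx : (x j).im ≤ T * (x j).re := le_trans (le_abs_self _) (hx1 j).2
      have hy : (y j).im ≤ T * (y j).re := le_trans (le_abs_self _) (hy1 j).2
      refine comb_eq ha hc hx hy ?_
      have h' : a * (T * (x j).re) + c * (T * (y j).re) = T / 2 := by
        linear_combination T * e_re
      rw [e_im, h', hb, hT]
    have hxk_im : -(x k).im = T * (x k).re := by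
      have e_re : a * (x k).re + c * (y k).re = 1/2 := by
        have := hre k; simpa [hη, hjk.symm] using this
      have e_im : a * (x k).im + c * (y k).im = -b := by
        have := him k; simpa [hη, hjk.symm] using this
      have hx : -(x k).im ≤ T * (x k).re := le_trans (neg_le_abs _) (hx1 k).2
      have hy : -(y k).im ≤ T * (y k).re := le_trans (neg_le_abs _) (hy1 k).2
      refine comb_eq ha hc hx hy ?_
      have h' : a * (T * (x k).re) + c * (T * (y k).re) = T / 2 := by
        linear_combination T * e_re
      rw [h']
      rw [hb] at e_im
      linarith [e_im]
    -- the sum condition determines x j + x k = 1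
    have hsx : x j + x k = 1 := by
      have : (∑ i, x i) = x j + x k := by
        have hpt : ∀ i : Fin m, x i = (if i = j then x j else if i = k then x k else 0) := by
          intro i
          by_cases h1 : i = j
          · subst h1; simp
          · by_cases h2 : i = k
            · subst h2; simp [h1]
            · simp [h1, h2, hzero i h1 h2]
        rw [Finset.sum_congr rfl (fun i _ => hpt i), hsum]
      rw [← this, hx2]
    have hre_sum : (x j).re + (x k).re = 1 := by
      have := congrArg Complex.re hsx; simpa using this
    have him_sum : (x j).im + (x k).im = 0 := by
      have := congrArg Complex.im hsx; simpa using this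
    have hreq : (x j).re = (x k).re := by
      have : T * (x j).re - T * (x k).re = 0 := by
        rw [← hxj_im, ← hxk_im]; linarith
      have := mul_left_cancel₀ (ne_of_gt hT0) (show T * (x j).re = T * (x k).re by linarith)
      exact this
    have hrj : (x j).re = 1/2 := by linarith
    have hrk : (x k).re = 1/2 := by linarith
    funext l
    by_cases h1 : l = j
    · subst h1
      show x l = η l
      simp only [hη, if_pos rfl]
      refine Complex.ext (by simpa using hrj) ?_
      show (x l).im = b
      rw [hxj_im, hrj, hb]; ring
    · by_cases h2 : l = k
      · subst h2
        show x l = η l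
        simp only [hη, if_neg h1, if_pos rfl]
        refine Complex.ext (by simpa using hrk) ?_
        show (x l).im = -b
        have : (x l).im = -(T * (x l).re) := by linarith [hxk_im]
        rw [this, hrk, hb]; ring
      · show x l = η l
        simp only [hη, if_neg h1, if_neg h2]
        exact hzero l h1 h2
  rintro x₁ hx₁ x₂ hx₂ hseg
  rw [openSegment_eq_image] at hseg
  obtain ⟨t, ht, heq⟩ := hseg
  have h1 : (1 - t) • x₁ + t • x₂ = η := by
    rw [← heq]
  constructor
  · exact key (1 - t) t x₁ x₂ (by linarith [ht.2]) ht.1 (by ring) hx₁ hx₂ h1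
  · have h2 : t • x₂ + (1 - t) • x₁ = η := by rw [← h1]; abel
    exact key t (1 - t) x₂ x₁ ht.1 (by linarith [ht.2]) (by ring) hx₂ hx₁ h2
end

section
/- If z ∈ S_α^m is an extreme point different from every standard basis vector e^k, then every coordinate z_i with Re(z_i) ∈ (0,1) satisfies |arg(z_i)| = α₀. -/
/-!
If `z i` lay strictly inside the sector `|Im w| ≤ tan α₀ · Re w`, then, since `Re (z i) < 1` and the
real parts sum to `1`, some other coordinate `z j` has positive real part. Moving the amount
`s · z j` from coordinate `j` to coordinate `i`, or back, keeps the point in `S_α^m` for small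
`s > 0`: the sector is a convex cone, and `z i` is interior to it. So `z` is the midpoint of two
distinct points of `S_α^m`.
-/

open Filter Topology

def argSector (α : ℝ) : Set ℂ :=
  {w | 0 ≤ w.re ∧ |w.im| ≤ Real.tan α * w.re}

namespace argSector

variable {α : ℝ} {a b : ℂ}

theorem add_mem (ha : a ∈ argSector α) (hb : b ∈ argSector α) : a + b ∈ argSector α :=
  ⟨add_nonneg ha.1 hb.1,
    (abs_add_le _ _).trans (by rw [Complex.add_re, mul_add]; linarith [ha.2, hb.2])⟩

theorem ofReal_mul_mem {c : ℝ} (hc : 0 ≤ c) (ha : a ∈ argSector α) :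
    (c : ℂ) * a ∈ argSector α := by
  refine ⟨by simpa using mul_nonneg hc ha.1, ?_⟩
  rw [Complex.im_ofReal_mul, Complex.re_ofReal_mul, abs_mul, abs_of_nonneg hc, mul_left_comm]
  exact mul_le_mul_of_nonneg_left ha.2 hc

theorem eventually_sub_mem (b : ℂ) (hre : 0 < a.re) (him : |a.im| < Real.tan α * a.re) :
    ∀ᶠ s : ℝ in 𝓝 0, a - s * b ∈ argSector α := by
  have hpos : ∀ᶠ s : ℝ in 𝓝 0, 0 < (a - s * b).re :=
    continuousAt_const.eventually_lt (by fun_prop) (by simpa using hre)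
  have hcone : ∀ᶠ s : ℝ in 𝓝 0, |(a - s * b).im| < Real.tan α * (a - s * b).re :=
    ContinuousAt.eventually_lt (by fun_prop) (by fun_prop) (by simpa using him)
  filter_upwards [hpos, hcone] with s hpos hcone using ⟨hpos.le, hcone.le⟩

end argSector

theorem mem_Sarg_iff {m : ℕ} {α : ℝ} {z : Fin m → ℂ} :
    z ∈ Sarg m α ↔ (∀ i, z i ∈ argSector α) ∧ ∑ i, z i = 1 :=
  Iff.rfl

theorem eq_zero_of_add_mem_of_sub_mem_of_mem_extremePoints {𝕜 E : Type*} [Ring 𝕜] [LinearOrder 𝕜]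
    [IsStrictOrderedRing 𝕜] [Invertible (2 : 𝕜)] [AddCommGroup E] [Module 𝕜 E] {A : Set E}
    {x v : E} (hx : x ∈ A.extremePoints 𝕜) (hadd : x + v ∈ A) (hsub : x - v ∈ A) : v = 0 :=
  add_eq_left.1 (hx.2 hadd hsub (mem_openSegment_add_sub x v))

theorem exists_ne_pos_of_lt_sum {ι : Type*} [Fintype ι] {f : ι → ℝ} (hf : ∀ k, 0 ≤ f k) {i : ι}
    (hi : f i < ∑ k, f k) : ∃ j ≠ i, 0 < f j := by
  by_contra! h
  rw [Fintype.sum_eq_single i fun k hk ↦ le_antisymm (h k hk) (hf k)] at hi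
  exact hi.false

section transfer

variable {m : ℕ} {α : ℝ} {z : Fin m → ℂ} {i j : Fin m}

theorem add_single_sub_single_mem_Sarg (hz : z ∈ Sarg m α) (hij : i ≠ j) {w : ℂ}
    (hi : z i + w ∈ argSector α) (hj : z j - w ∈ argSector α) :
    z + (Pi.single i w - Pi.single j w) ∈ Sarg m α := by
  refine mem_Sarg_iff.2 ⟨fun k ↦ ?_, ?_⟩
  · rcases eq_or_ne k i with rfl | hki
    · simpa [hij] using hi
    rcases eq_or_ne k j with rfl | hkj
    · simpa [hki, sub_eq_add_neg] using hj
    simpa [hki, hkj] using (mem_Sarg_iff.1 hz).1 k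
  · simp [Finset.sum_add_distrib, Finset.sum_sub_distrib, hz.2]

theorem notMem_extremePoints_Sarg (hz : z ∈ Sarg m α) (hij : i ≠ j) {w : ℂ} (hw : w ≠ 0)
    (hi₁ : z i + w ∈ argSector α) (hi₂ : z i - w ∈ argSector α)
    (hj₁ : z j - w ∈ argSector α) (hj₂ : z j + w ∈ argSector α) :
    z ∉ (Sarg m α).extremePoints ℝ := by
  intro hext
  have hsub : z - (Pi.single i w - Pi.single j w) ∈ Sarg m α := by
    convert add_single_sub_single_mem_Sarg hz hij (w := -w) (by rwa [← sub_eq_add_neg])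
      (by rwa [sub_neg_eq_add]) using 1
    simp only [Pi.single_neg]
    abel
  have hv := eq_zero_of_add_mem_of_sub_mem_of_mem_extremePoints hext
    (add_single_sub_single_mem_Sarg hz hij hi₁ hj₁) hsub
  exact hw (by simpa [hij] using congrFun hv i)

end transfer

theorem extreme_point_boundary_argument_general (m : ℕ) (α₀ : ℝ)
    (z : Fin m → ℂ) (hz : z ∈ Set.extremePoints ℝ (Sarg m α₀))
    (i : Fin m) (hre : (z i).re ∈ Set.Ioo (0 : ℝ) 1) :
    |(z i).im| = Real.tan α₀ * (z i).re := by
  have hS := mem_Sarg_iff.1 hz.1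
  have hre_sum : ∑ k, (z k).re = 1 := by simpa using congrArg Complex.re hS.2
  obtain ⟨j, hji, hj⟩ :=
    exists_ne_pos_of_lt_sum (fun k ↦ (hS.1 k).1) (hre.2.trans_eq hre_sum.symm)
  refine le_antisymm (hS.1 i).2 (not_lt.1 fun hlt ↦ ?_)
  obtain ⟨s, hs_mem, hs⟩ : ∃ s : ℝ, z i - s * z j ∈ argSector α₀ ∧ s ∈ Set.Ioo 0 1 :=
    (((argSector.eventually_sub_mem (z j) hre.1 hlt).filter_mono nhdsWithin_le_nhds).and
      (Ioo_mem_nhdsGT one_pos)).exists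
  have hscale (c : ℝ) : z j + c * z j = ((1 + c : ℝ) : ℂ) * z j := by push_cast; ring
  refine notMem_extremePoints_Sarg hz.1 hji.symm (w := s * z j) ?_
    (argSector.add_mem (hS.1 i) (argSector.ofReal_mul_mem hs.1.le (hS.1 j))) hs_mem ?_ ?_ hz
  · exact mul_ne_zero (Complex.ofReal_ne_zero.2 hs.1.ne') fun h ↦ by simp [h] at hj
  · rw [sub_eq_add_neg, ← neg_mul, ← Complex.ofReal_neg, hscale]
    exact argSector.ofReal_mul_mem (by linarith [hs.2]) (hS.1 j)
  · rw [hscale]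
    exact argSector.ofReal_mul_mem (by linarith [hs.1]) (hS.1 j)

/-- A nontrivial extreme point of S_α^m has all coordinates with real part in (0,1)
on the boundary of the argument cone: |arg z_i| = α₀. -/
theorem extreme_point_boundary_argument (m : ℕ) (α₀ : ℝ)
    (hα : α₀ ∈ Set.Ioo 0 (Real.pi / 2))
    (z : Fin m → ℂ) (hz : z ∈ Set.extremePoints ℝ (Sarg m α₀))
    (hne : ∀ k : Fin m, z ≠ fun j => if j = k then (1 : ℂ) else 0)
    (i : Fin m) (hre : (z i).re ∈ Set.Ioo (0 : ℝ) 1) :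
    |(z i).im| = Real.tan α₀ * (z i).re :=
  extreme_point_boundary_argument_general m α₀ z hz i hre
end

section
/- The set S_α^m = {z ∈ ℂ^m : |arg z_j| ≤ α₀ ∀j, ∑_j z_j = 1} is a convex polytope: it equals the convex hull of the m² points consisting of the m standard basis vectors e^i together with the m² − m vectors η^{jk} (j ≠ k) having coordinate 1/2 + i·tan(α₀)/2 in position j, coordinate 1/2 − i·tan(α₀)/2 in position k, and 0 elsewhere. -/
/-! Write `t = tan α₀` and `p = 1/2 + i t/2`, so that `p + p̄ = 1`. A complex number `w` lies in
the sector `|Im w| ≤ t Re w` exactly when `w = r p + s p̄` with `r, s ≥ 0`, namely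
`r, s = Re w ± Im w / t`; summing over the coordinates, `∑ z = 1` makes `r` and `s` probability
vectors. Hence `S = pΔ + p̄Δ` for the real standard simplex `Δ`. Taking convex hulls commutes
with linear images and Minkowski sums, so `S` is the convex hull of the points `p eⱼ + p̄ eₖ`,
which are `eⱼ` for `j = k` and `η^{jk}` for `j ≠ k`. -/

open Set Pointwise

def sector (t : ℝ) : Set ℂ := {w | 0 ≤ w.re ∧ |w.im| ≤ t * w.re}

noncomputable def halfTilt (t : ℝ) : ℂ := ⟨1 / 2, t / 2⟩

@[simp] lemma halfTilt_re (t : ℝ) : (halfTilt t).re = 1 / 2 := rfl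

@[simp] lemma halfTilt_im (t : ℝ) : (halfTilt t).im = t / 2 := rfl

lemma halfTilt_add_halfTilt_neg (t : ℝ) : halfTilt t + halfTilt (-t) = 1 := by
  apply Complex.ext <;> simp <;> ring

lemma re_add_im_div_nonneg {w : ℂ} {t : ℝ} (ht : t ≠ 0) (hw : w ∈ sector |t|) :
    0 ≤ w.re + w.im / t := by
  have : |w.im / t| ≤ w.re := by
    rw [abs_div, div_le_iff₀ (abs_pos.2 ht), mul_comm]
    exact hw.2
  linarith [neg_abs_le (w.im / t)]

lemma re_add_im_div_smul_halfTilt_add {t : ℝ} (ht : t ≠ 0) (w : ℂ) :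
    (w.re + w.im / t) • halfTilt t + (w.re + w.im / -t) • halfTilt (-t) = w := by
  apply Complex.ext <;>
    simp only [Complex.add_re, Complex.add_im, Complex.smul_re, Complex.smul_im,
      halfTilt_re, halfTilt_im, smul_eq_mul] <;>
    field_simp <;> ring

lemma smul_halfTilt_add_smul_halfTilt_neg_mem_sector {t a b : ℝ} (ht : 0 ≤ t) (ha : 0 ≤ a)
    (hb : 0 ≤ b) : a • halfTilt t + b • halfTilt (-t) ∈ sector t := by
  simp only [sector, mem_ofPred_eq, Complex.add_re, Complex.add_im, Complex.smul_re,
    Complex.smul_im, halfTilt_re, halfTilt_im, smul_eq_mul]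
  refine ⟨by positivity, ?_⟩
  calc |a * (t / 2) + b * (-t / 2)| = t / 2 * |a - b| := by
        rw [show a * (t / 2) + b * (-t / 2) = t / 2 * (a - b) by ring, abs_mul,
          abs_of_nonneg (by positivity)]
    _ ≤ t / 2 * (a + b) := by
        gcongr
        exact abs_sub_le_iff.2 ⟨by linarith, by linarith⟩
    _ = t * (a * (1 / 2) + b * (1 / 2)) := by ring

section

variable {ι : Type*}

noncomputable def piSmulRight (c : ℂ) : (ι → ℝ) →ₗ[ℝ] ι → ℂ :=
  (LinearMap.toSpanSingleton ℝ ℂ c).compLeft ι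

@[simp] lemma piSmulRight_apply (c : ℂ) (v : ι → ℝ) (i : ι) :
    piSmulRight c v i = v i • c := rfl

lemma image_basis_add_image_basis [DecidableEq ι] (t : ℝ) :
    piSmulRight (halfTilt t) '' range (fun i j : ι => if i = j then (1 : ℝ) else 0) +
      piSmulRight (halfTilt (-t)) '' range (fun i j : ι => if i = j then (1 : ℝ) else 0) =
    {d : ι → ℂ | (∃ i : ι, d = fun j => if j = i then (1 : ℂ) else 0) ∨
        (∃ j k : ι, j ≠ k ∧ d = fun l =>
          if l = j then (⟨1/2, t / 2⟩ : ℂ)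
          else if l = k then (⟨1/2, -(t / 2)⟩ : ℂ) else 0)} := by
  ext d
  simp only [mem_add, mem_image, mem_range, exists_exists_eq_and, mem_ofPred_eq]
  constructor
  · rintro ⟨j, k, rfl⟩
    rcases eq_or_ne j k with rfl | hjk
    · refine .inl ⟨j, funext fun l => ?_⟩
      by_cases hl : j = l <;> simp [hl, Ne.symm, halfTilt_add_halfTilt_neg]
    · refine .inr ⟨j, k, hjk, funext fun l => ?_⟩
      by_cases hlj : l = j <;> by_cases hlk : l = k <;> simp_all [eq_comm, halfTilt, neg_div]
  · rintro (⟨i, rfl⟩ | ⟨j, k, hjk, rfl⟩)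
    · refine ⟨i, i, funext fun l => ?_⟩
      by_cases hl : i = l <;> simp [hl, Ne.symm, halfTilt_add_halfTilt_neg]
    · refine ⟨j, k, funext fun l => ?_⟩
      by_cases hlj : l = j <;> by_cases hlk : l = k <;> simp_all [eq_comm, halfTilt, neg_div]

variable [Fintype ι]

lemma sum_re_add_im_div {z : ι → ℂ} (hz : ∑ i, z i = 1) (u : ℝ) :
    ∑ i, ((z i).re + (z i).im / u) = 1 := by
  rw [Finset.sum_add_distrib, ← Finset.sum_div, ← Complex.re_sum, ← Complex.im_sum, hz]
  simp

lemma sector_sum_one_subset_add {t : ℝ} (ht : 0 < t) :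
    {z : ι → ℂ | (∀ i, z i ∈ sector t) ∧ ∑ i, z i = 1} ⊆
      piSmulRight (halfTilt t) '' stdSimplex ℝ ι +
        piSmulRight (halfTilt (-t)) '' stdSimplex ℝ ι := by
  rintro z ⟨hsector, hsum⟩
  have hmem (u : ℝ) (hu : |u| = t) : (fun i => (z i).re + (z i).im / u) ∈ stdSimplex ℝ ι :=
    ⟨fun i => re_add_im_div_nonneg (abs_ne_zero.1 (hu ▸ ht.ne')) (hu ▸ hsector i),
      sum_re_add_im_div hsum u⟩
  exact ⟨_, ⟨_, hmem t (abs_of_pos ht), rfl⟩,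
    _, ⟨_, hmem (-t) (by rw [abs_neg, abs_of_pos ht]), rfl⟩,
    funext fun i => re_add_im_div_smul_halfTilt_add ht.ne' (z i)⟩

lemma add_subset_sector_sum_one {t : ℝ} (ht : 0 ≤ t) :
    piSmulRight (halfTilt t) '' stdSimplex ℝ ι + piSmulRight (halfTilt (-t)) '' stdSimplex ℝ ι ⊆
      {z : ι → ℂ | (∀ i, z i ∈ sector t) ∧ ∑ i, z i = 1} := by
  rintro _ ⟨_, ⟨r, ⟨hr0, hr1⟩, rfl⟩, _, ⟨s, ⟨hs0, hs1⟩, rfl⟩, rfl⟩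
  refine ⟨fun i => smul_halfTilt_add_smul_halfTilt_neg_mem_sector ht (hr0 i) (hs0 i), ?_⟩
  simp only [Pi.add_apply, piSmulRight_apply, Finset.sum_add_distrib, ← Finset.sum_smul, hr1,
    hs1, one_smul, halfTilt_add_halfTilt_neg]

end

theorem Sarg_eq_convexHull_general (m : ℕ) (α₀ : ℝ)
    (hα : α₀ ∈ Set.Ioo 0 (Real.pi / 2)) :
    Sarg m α₀ = convexHull ℝ
      {d : Fin m → ℂ |
        (∃ i : Fin m, d = fun j => if j = i then (1 : ℂ) else 0) ∨
        (∃ j k : Fin m, j ≠ k ∧ d = fun l =>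
          if l = j then (⟨1/2, Real.tan α₀ / 2⟩ : ℂ)
          else if l = k then (⟨1/2, -(Real.tan α₀ / 2)⟩ : ℂ) else 0)} := by
  have ht : 0 < Real.tan α₀ := Real.tan_pos_of_pos_of_lt_pi_div_two hα.1 hα.2
  rw [← image_basis_add_image_basis, convexHull_add, ← LinearMap.image_convexHull,
    ← LinearMap.image_convexHull, convexHull_basis_eq_stdSimplex]
  exact (sector_sum_one_subset_add ht).antisymm (add_subset_sector_sum_one ht.le)

/-- S_α^m is a convex polytope: it is the convex hull of the m standard basis vectors
together with the m² − m two-support vectors with entries 1/2 ± i·tan(α₀)/2. -/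
theorem Sarg_eq_convexHull (m : ℕ) (hm : 2 ≤ m) (α₀ : ℝ)
    (hα : α₀ ∈ Set.Ioo 0 (Real.pi / 2)) :
    Sarg m α₀ = convexHull ℝ
      {d : Fin m → ℂ |
        (∃ i : Fin m, d = fun j => if j = i then (1 : ℂ) else 0) ∨
        (∃ j k : Fin m, j ≠ k ∧ d = fun l =>
          if l = j then (⟨1/2, Real.tan α₀ / 2⟩ : ℂ)
          else if l = k then (⟨1/2, -(Real.tan α₀ / 2)⟩ : ℂ) else 0)} :=
  Sarg_eq_convexHull_general m α₀ hα
end
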